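/- arXiv:1205.4703 — 5 statements merged into one kernel-verified Lean document; each statement's English description precedes it below -/
import Mathlib

section
/- Let r₁ > 0, r₂ < 0 with -r₂ > r₁ (i.e. r₁ + r₂ < 0), and set α* = r₁r₂/(r₁ + r₂). Then α* > 0, and for every α > α*, Λ₁ = ((r₁+r₂-2α) + √(4α² + (r₁-r₂)²))/2 < 0. -/
theorem mixed_case_stabilized (r₁ r₂ : ℝ) (h₁ : 0 < r₁) (h₂ : r₂ < 0) (h : r₁ < -r₂) :
    0 < r₁ * r₂ / (r₁ + r₂) ∧
    ∀ α : ℝ, r₁ * r₂ / (r₁ + r₂) < α →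
      ((r₁ + r₂ - 2 * α) + Real.sqrt (4 * α ^ 2 + (r₁ - r₂) ^ 2)) / 2 < 0 := by
  have hs : r₁ + r₂ < 0 := by linarith
  have hstar : 0 < r₁ * r₂ / (r₁ + r₂) := by
    apply div_pos_of_neg_of_neg
    · exact mul_neg_of_pos_of_neg h₁ h₂
    · exact hs
  refine ⟨hstar, fun α hα => ?_⟩
  have hα0 : 0 < α := hstar.trans hα
  have hy : 0 < 2 * α - (r₁ + r₂) := by linarith
  have hkey : α * (r₁ + r₂) < r₁ * r₂ := by
    have := (div_lt_iff_of_neg hs).mp hα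
    linarith
  have hsq : Real.sqrt (4 * α ^ 2 + (r₁ - r₂) ^ 2) < 2 * α - (r₁ + r₂) := by
    rw [show Real.sqrt (4 * α ^ 2 + (r₁ - r₂) ^ 2) < 2 * α - (r₁ + r₂) ↔
      4 * α ^ 2 + (r₁ - r₂) ^ 2 < (2 * α - (r₁ + r₂)) ^ 2 from Real.sqrt_lt' hy]
    nlinarith
  linarith
end

section
/- Let r₁ > 0, r₂ < 0 with -r₂ > r₁. For α ≥ 0, the inequality √(4α² + (r₁-r₂)²) < 2α - (r₁+r₂) is equivalent to α > r₁r₂/(r₁+r₂). -/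
theorem threshold_equiv (r₁ r₂ α : ℝ) (h₁ : 0 < r₁) (h₂ : r₂ < 0) (h : r₁ < -r₂)
    (hα : 0 ≤ α) :
    Real.sqrt (4 * α ^ 2 + (r₁ - r₂) ^ 2) < 2 * α - (r₁ + r₂) ↔
      r₁ * r₂ / (r₁ + r₂) < α := by
  have hs : r₁ + r₂ < 0 := by linarith
  have hb : 0 < 2 * α - (r₁ + r₂) := by linarith
  rw [show r₁ * r₂ / (r₁ + r₂) < α ↔ α * (r₁ + r₂) < r₁ * r₂ from div_lt_iff_of_neg hs,
    Real.sqrt_lt' hb]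
  constructor <;> intro hx <;> nlinarith
end

section
/- Let r₁ < 0 and r₂ < 0. Then for all α ≥ 0, Λ₁ = ((r₁+r₂-2α) + √(4α² + (r₁-r₂)²))/2 < 0. Hence the origin of the linearly coupled normal form is stable for every nonnegative coupling strength. -/
theorem both_subcritical_stable (r₁ r₂ : ℝ) (h₁ : r₁ < 0) (h₂ : r₂ < 0) :
    ∀ α : ℝ, 0 ≤ α →
      ((r₁ + r₂ - 2 * α) + Real.sqrt (4 * α ^ 2 + (r₁ - r₂) ^ 2)) / 2 < 0 := by
  intro α hα
  have hy : (0:ℝ) < 2 * α - (r₁ + r₂) := by nlinarith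
  have hs : Real.sqrt (4 * α ^ 2 + (r₁ - r₂) ^ 2) < 2 * α - (r₁ + r₂) := by
    rw [show (2 * α - (r₁ + r₂)) = Real.sqrt ((2 * α - (r₁ + r₂))^2) by
      rw [Real.sqrt_sq hy.le]]
    apply Real.sqrt_lt_sqrt (by positivity)
    nlinarith [mul_pos (neg_pos.2 h₁) (neg_pos.2 h₂), mul_nonneg hα (by linarith : (0:ℝ) ≤ -(r₁+r₂))]
  linarith
end

section
/- Let r₁ > 0 and r₂ > 0 and 0 ≤ σ < 1. Then Λ₁ = (1/(2(1-σ)))·((r₁+r₂-2σ) + √(4σ² + (r₁-r₂)²)) > 0; i.e., mass-action (short-term) migration cannot stabilize the disease-free state when both isolated populations are endemic. -/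
theorem mass_action_both_endemic_unstable (r₁ r₂ σ : ℝ) (h₁ : 0 < r₁) (h₂ : 0 < r₂)
    (hσ0 : 0 ≤ σ) (hσ1 : σ < 1) :
    0 < (1 / (2 * (1 - σ))) *
        ((r₁ + r₂ - 2 * σ) + Real.sqrt (4 * σ ^ 2 + (r₁ - r₂) ^ 2)) := by
  have hs : (2:ℝ) * σ ≤ Real.sqrt (4 * σ ^ 2 + (r₁ - r₂) ^ 2) := by
    have : (2*σ)^2 ≤ 4 * σ ^ 2 + (r₁ - r₂) ^ 2 := by nlinarith [sq_nonneg (r₁ - r₂)]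
    nlinarith [Real.sq_sqrt (by positivity : (0:ℝ) ≤ 4 * σ ^ 2 + (r₁ - r₂) ^ 2),
      Real.sqrt_nonneg (4 * σ ^ 2 + (r₁ - r₂) ^ 2)]
  have h1 : (0:ℝ) < 1 / (2 * (1 - σ)) := by refine one_div_pos.mpr (by linarith)
  have h2 : 0 < (r₁ + r₂ - 2 * σ) + Real.sqrt (4 * σ ^ 2 + (r₁ - r₂) ^ 2) := by linarith
  exact mul_pos h1 h2
end

section
/- The point (S₁, I₁, S₂, I₂) = (N₁Ŝ₁, 0, N₂Ŝ₂, 0), with Ŝ₁ = ((1-v₁)(μ₁c₁ + μ₁μ₂) + (1-v₂)μ₂c₁ρ)/(μ₁c₁ + μ₁μ₂ + μ₂c₁ρ) and Ŝ₂ = ((1-v₁)μ₁c₁ + (1-v₂)(μ₁μ₂ + μ₂c₁ρ))/(μ₁c₁ + μ₁μ₂ + μ₂c₁ρ), is an equilibrium of the coupled two-patch SIR system (all time derivatives vanish there). -/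
theorem dfe_is_equilibrium (β κ μ₁ μ₂ N₁ N₂ ρ c₁ c₂ c₃ v₁ v₂ : ℝ)
    (hβ : 0 < β) (hκ : 0 < κ) (hμ₁ : 0 < μ₁) (hμ₂ : 0 < μ₂)
    (hN₁ : 0 < N₁) (hN₂ : 0 < N₂) (hρ : ρ = N₂ / N₁) (hc₂ : c₂ = c₁ * ρ)
    (hc₁ : 0 ≤ c₁) (hc₃0 : 0 ≤ c₃) (hc₃1 : c₃ ≤ 1)
    (hv₁0 : 0 ≤ v₁) (hv₁1 : v₁ ≤ 1) (hv₂0 : 0 ≤ v₂) (hv₂1 : v₂ ≤ 1)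
    (S₁ I₁ S₂ I₂ Shat₁ Shat₂ : ℝ)
    (hShat₁ : Shat₁ = ((1 - v₁) * (μ₁ * c₁ + μ₁ * μ₂) + (1 - v₂) * μ₂ * c₁ * ρ) /
        (μ₁ * c₁ + μ₁ * μ₂ + μ₂ * c₁ * ρ))
    (hShat₂ : Shat₂ = ((1 - v₁) * μ₁ * c₁ + (1 - v₂) * (μ₁ * μ₂ + μ₂ * c₁ * ρ)) /
        (μ₁ * c₁ + μ₁ * μ₂ + μ₂ * c₁ * ρ))
    (hS₁ : S₁ = N₁ * Shat₁) (hI₁ : I₁ = 0) (hS₂ : S₂ = N₂ * Shat₂) (hI₂ : I₂ = 0) :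
    (1 - v₁) * μ₁ * N₁ - (1 - c₃) * β * S₁ * I₁ / N₁ - c₃ * β * S₁ * I₂ / N₁
        - μ₁ * S₁ + c₁ * S₂ - c₂ * S₁ = 0 ∧
    (1 - c₃) * β * S₁ * I₁ / N₁ + c₃ * β * S₁ * I₂ / N₁ - κ * I₁ - μ₁ * I₁
        + c₁ * I₂ - c₂ * I₁ = 0 ∧
    (1 - v₂) * μ₂ * N₂ - (1 - c₃) * β * S₂ * I₂ / N₂ - c₃ * β * S₂ * I₁ / N₂
        - μ₂ * S₂ + c₂ * S₁ - c₁ * S₂ = 0 ∧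
    (1 - c₃) * β * S₂ * I₂ / N₂ + c₃ * β * S₂ * I₁ / N₂ - κ * I₂ - μ₂ * I₂
        + c₂ * I₁ - c₁ * I₂ = 0 := by
  have hρpos : 0 < ρ := hρ ▸ div_pos hN₂ hN₁
  have hD : μ₁ * c₁ + μ₁ * μ₂ + μ₂ * c₁ * ρ ≠ 0 := by positivity
  have hN₂' : N₂ = ρ * N₁ := by rw [hρ]; field_simp
  subst hS₁ hS₂ hI₁ hI₂ hShat₁ hShat₂ hc₂ hN₂'
  refine ⟨?_, by ring, ?_, by ring⟩ <;> field_simp <;> ring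
end
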